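/- arXiv:math/0407381 — 2 statements merged into one kernel-verified Lean document; each statement's English description precedes it below -/
import Mathlib

section
/- Let l₁, l₂, l₃ ∈ ℂ be nonzero. If Q is a nonzero prime 𝔇-stable ideal of T, then w ∈ Q. -/
noncomputable section

open MvPolynomial

abbrev R3 : Type := MvPolynomial (Fin 3) ℂ

def chi : R3 :=
  C (484/49) * (C 50000 * (X 1) ^ 6 - C 1000 * (X 0) ^ 2 * X 2 * (X 1) ^ 4
    + (X 0) ^ 5 * (X 1) ^ 4 - C 2 * (X 0) ^ 4 * (X 2) ^ 2 * (X 1) ^ 2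
    + C 1800 * X 0 * (X 2) ^ 3 * (X 1) ^ 2 + (X 0) ^ 3 * (X 2) ^ 4 - C 864 * (X 2) ^ 5)

/-- The relation `W² - χ` inside `ℂ[X, Y, Z, W]`. -/
def relIdeal : Ideal (MvPolynomial (Fin 4) ℂ) :=
  Ideal.span {(X 3) ^ 2 - (rename Fin.castSucc chi)}

/-- `T = ℂ[X, Y, Z, W]/(W² - χ)`. -/
abbrev T : Type := MvPolynomial (Fin 4) ℂ ⧸ relIdeal

def mkT : MvPolynomial (Fin 4) ℂ →ₐ[ℂ] T := Ideal.Quotient.mkₐ ℂ relIdeal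

def xT : T := mkT (X 0)
def yT : T := mkT (X 1)
def zT : T := mkT (X 2)
/-- `w`, the class of `W` in `T`. -/
def wT : T := mkT (X 3)

/-- The canonical map `ℂ[X, Y, Z] → T`. -/
def toT : R3 →ₐ[ℂ] T := mkT.comp (rename Fin.castSucc)

/-- The structure map `ℂ → T`. -/
def CT : ℂ → T := algebraMap ℂ T

/-- `D` is the extension of `d*` to `T`. -/
def IsDStarT (D : Derivation ℂ T T) : Prop :=
  D xT = CT (4/5) * yT * (xT ^ 3 - CT 1050 * zT) ∧
  D yT = CT (1/10) * xT * (CT 7 * zT ^ 2 - CT 15 * xT * yT ^ 2) ∧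
  D zT = -(CT (2/5)) * yT * (xT ^ 2 * zT + CT 875 * yT ^ 2) ∧
  D wT = -(xT ^ 2 * yT) * wT

/-- `D` is the extension of `e*` to `T`. -/
def IsEStarT (D : Derivation ℂ T T) : Prop :=
  D xT = -(CT 1152) * zT ^ 2 + CT 240 * xT * yT ^ 2 + CT (4/5) * xT ^ 3 * zT ∧
  D yT = yT * (-(CT (6/5)) * xT ^ 2 * zT + CT 200 * yT ^ 2) ∧
  D zT = -(CT 240) * yT ^ 2 * zT - CT (8/5) * xT ^ 2 * zT ^ 2 + CT (4/5) * xT ^ 3 * yT ^ 2 ∧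
  D wT = -(CT 2) * (xT ^ 2 * zT - CT 300 * yT ^ 2) * wT

/-- `D` is the extension of `f*` to `T`. -/
def IsFStarT (D : Derivation ℂ T T) : Prop :=
  D xT = yT * (CT 550 * yT ^ 2 - CT (4/5) * xT ^ 2 * zT) ∧
  D yT = zT * (CT (7/2) * xT * yT ^ 2 - CT (33/10) * zT ^ 2) ∧
  D zT = yT * (CT (11/4) * xT ^ 2 * yT ^ 2 - CT (59/20) * xT * zT ^ 2) ∧
  D wT = -(CT (1/2)) * xT * yT * zT * wT

/-- `D` is the derivation `d_*` attached to the constant `l₁`. -/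
def IsDLow (l₁ : ℂ) (D : Derivation ℂ T T) : Prop :=
  D xT = 0 ∧ D yT = 0 ∧ D zT = CT l₁ * wT ∧ D wT = CT (l₁ / 2) * toT (pderiv 2 chi)

/-- `D` is the derivation `e_*` attached to the constant `l₂`. -/
def IsELow (l₂ : ℂ) (D : Derivation ℂ T T) : Prop :=
  D xT = 0 ∧ D zT = 0 ∧ D yT = CT l₂ * wT ∧ D wT = CT (l₂ / 2) * toT (pderiv 1 chi)

/-- `D` is the derivation `f_*` attached to the constant `l₃`. -/
def IsFLow (l₃ : ℂ) (D : Derivation ℂ T T) : Prop :=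
  D yT = 0 ∧ D zT = 0 ∧ D xT = CT l₃ * wT ∧ D wT = CT (l₃ / 2) * toT (pderiv 0 chi)

/-- `Q` is stable under all six derivations `d₁, d₂, e₁, e₂, f₁, f₂`. -/
def DStableT (dT eT fT dS eS fS : Derivation ℂ T T) (Q : Ideal T) : Prop :=
  (∀ q ∈ Q, (dT + dS) q ∈ Q) ∧ (∀ q ∈ Q, (dT - dS) q ∈ Q) ∧
  (∀ q ∈ Q, (eT + eS) q ∈ Q) ∧ (∀ q ∈ Q, (eT - eS) q ∈ Q) ∧
  (∀ q ∈ Q, (fT + fS) q ∈ Q) ∧ (∀ q ∈ Q, (fT - fS) q ∈ Q)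

/-! Halving the difference of `d₁` and `d₂` shows that `Q` is stable under `d_*`, and likewise
under `e_*` and `f_*`. On the image of `ℂ[X,Y,Z]` these act as `l₁ w ∂/∂Z`, `l₂ w ∂/∂Y` and
`l₃ w ∂/∂X`, so if `w ∉ Q` primality makes `Q ∩ ℂ[X,Y,Z]` closed under all partial derivatives,
and in characteristic zero such a proper ideal is zero. But a nonzero `a + b w ∈ Q` gives the
nonzero element `(a + b w)(a - b w) = a² - b² χ` of `Q ∩ ℂ[X,Y,Z]`: as `χ` has odd degree `5`
in `Z`, `a² = b² χ` forces `b = 0`. -/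

namespace MvPolynomial

variable {σ R : Type*}

theorem totalDegree_pderiv_lt [CommSemiring R] {i : σ} {p : MvPolynomial σ R}
    (h : pderiv i p ≠ 0) : (pderiv i p).totalDegree < p.totalDegree := by
  classical
  obtain ⟨m, hm, hmax⟩ := (pderiv i p).support.exists_mem_eq_sup (support_nonempty.mpr h)
    fun s => s.sum fun _ e => e
  have hcoeff : coeff (m + Finsupp.single i 1) p ≠ 0 := by
    refine left_ne_zero_of_mul (b := ((m i : R) + 1)) ?_
    rw [← coeff_pderiv]
    exact mem_support_iff.mp hm
  have hsum : ((m + Finsupp.single i 1).sum fun _ e => e) = (m.sum fun _ e => e) + 1 := by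
    rw [Finsupp.sum_add_index' (fun _ => rfl) (fun _ _ _ => rfl), Finsupp.sum_single_index rfl]
  have hle := le_totalDegree (mem_support_iff.mpr hcoeff)
  rw [hsum] at hle
  rw [totalDegree, hmax]
  exact hle

theorem exists_pderiv_ne_zero [CommSemiring R] [NoZeroDivisors R] [CharZero R]
    {p : MvPolynomial σ R} (hp : p ≠ C (p.coeff 0)) : ∃ i, pderiv i p ≠ 0 := by
  classical
  obtain ⟨m, hm⟩ : ∃ m, coeff m p ≠ coeff m (C (p.coeff 0)) := by
    by_contra! h
    exact hp (ext _ _ h)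
  have hm0 : m ≠ 0 := by
    rintro rfl
    simp at hm
  obtain ⟨i, hi⟩ := Finsupp.support_nonempty_iff.mpr hm0
  refine ⟨i, fun h => ?_⟩
  have hle : Finsupp.single i 1 ≤ m :=
    Finsupp.single_le_iff.mpr (Nat.one_le_iff_ne_zero.mpr (Finsupp.mem_support_iff.mp hi))
  have := congrArg (coeff (m - Finsupp.single i 1)) h
  rw [coeff_pderiv, tsub_add_cancel_of_le hle, coeff_zero] at this
  rw [coeff_C, if_neg (Ne.symm hm0)] at hm
  exact mul_ne_zero hm (Nat.cast_add_one_ne_zero _) this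

theorem ideal_eq_bot_of_pderiv_mem [Field R] [CharZero R] {I : Ideal (MvPolynomial σ R)}
    (hI : I ≠ ⊤) (hpd : ∀ i, ∀ p ∈ I, pderiv i p ∈ I) : I = ⊥ := by
  refine (Submodule.eq_bot_iff I).mpr fun p hp => ?_
  induction hn : p.totalDegree using Nat.strong_induction_on generalizing p with
  | _ n ih =>
  by_contra hp0
  by_cases hC : p = C (p.coeff 0)
  · have hunit : IsUnit p := by
      rw [hC]
      exact (isUnit_iff_ne_zero.mpr fun h => hp0 (by rw [hC, h, map_zero])).map C
    exact hI (I.eq_top_of_isUnit_mem hp hunit)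
  · obtain ⟨i, hi⟩ := exists_pderiv_ne_zero hC
    exact hi (ih _ (hn ▸ totalDegree_pderiv_lt hi) _ (hpd i p hp) rfl)

theorem eq_zero_of_sq_eq_sq_mul [CommRing R] [IsDomain R] {i : σ} {a b c : MvPolynomial σ R}
    (hc : Odd (c.degreeOf i)) (h : a ^ 2 = b ^ 2 * c) : b = 0 := by
  by_contra hb
  have hc0 : c ≠ 0 := ne_zero_of_degreeOf_ne_zero hc.pos.ne'
  have ha : a ≠ 0 := by
    rintro rfl
    exact mul_ne_zero (pow_ne_zero 2 hb) hc0 (by rw [← h, zero_pow two_ne_zero])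
  have hdeg := congrArg (degreeOf i) h
  rw [degreeOf_pow_eq i a 2 ha, degreeOf_mul_eq (pow_ne_zero 2 hb) hc0,
    degreeOf_pow_eq i b 2 hb] at hdeg
  rw [Nat.odd_iff] at hc
  omega

theorem derivation_map_eq_pderiv_mul {A : Type*} [CommRing R] [CommRing A] [Algebra R A]
    (φ : MvPolynomial σ R →ₐ[R] A) (D : Derivation R A A) {i : σ}
    (hD : ∀ j ≠ i, D (φ (X j)) = 0) (p : MvPolynomial σ R) :
    D (φ p) = φ (pderiv i p) * D (φ (X i)) := by
  induction p using MvPolynomial.induction_on with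
  | C c => rw [pderiv_C, map_zero, zero_mul, ← algebraMap_eq, AlgHom.commutes, D.map_algebraMap]
  | add p q hp hq => simp only [map_add, hp, hq, add_mul]
  | mul_X p j hp =>
    rw [map_mul, D.leibniz, hp, smul_eq_mul, smul_eq_mul, pderiv_mul, map_add, map_mul, map_mul]
    by_cases hj : j = i
    · subst hj
      rw [pderiv_X_self, map_one]
      ring
    · rw [hD j hj, pderiv_X_of_ne hj, map_zero]
      ring

theorem pderiv_mem_comap {A : Type*} [CommRing R] [CommRing A] [Algebra R A]
    {φ : MvPolynomial σ R →ₐ[R] A} {Q : Ideal A} [hQ : Q.IsPrime] {D : Derivation R A A}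
    (hDQ : ∀ a ∈ Q, D a ∈ Q) {i : σ} (hi : D (φ (X i)) ∉ Q) (hj : ∀ j ≠ i, D (φ (X j)) = 0)
    {p : MvPolynomial σ R} (hp : p ∈ Q.comap φ) : pderiv i p ∈ Q.comap φ := by
  have := hDQ _ hp
  rw [derivation_map_eq_pderiv_mul φ D hj] at this
  exact (hQ.mem_or_mem this).resolve_right hi

end MvPolynomial

theorem Derivation.apply_mem_of_add_of_sub {K A : Type*} [Field K] [NeZero (2 : K)] [CommRing A]
    [Algebra K A] {I : Ideal A} {D E : Derivation K A A} (hadd : ∀ a ∈ I, (D + E) a ∈ I)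
    (hsub : ∀ a ∈ I, (D - E) a ∈ I) : ∀ a ∈ I, E a ∈ I := by
  intro a ha
  have h : E a = (2⁻¹ : K) • ((D + E) a - (D - E) a) := by
    rw [add_apply, sub_apply, add_sub_sub_cancel, ← two_smul K, smul_smul,
      inv_mul_cancel₀ two_ne_zero, one_smul]
  rw [h]
  exact Submodule.smul_of_tower_mem _ _ (I.sub_mem (hadd a ha) (hsub a ha))

theorem degreeOf_two_chi : chi.degreeOf 2 = 5 := by
  classical
  rw [degreeOf_eq_natDegree]
  simp only [chi, map_mul, map_sub, map_add, map_pow, rename_X, rename_C,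
    Equiv.optionSubtypeNe_symm_apply, Fin.reduceEq, ↓reduceDIte, optionEquivLeft_X_some,
    optionEquivLeft_X_none, optionEquivLeft_C]
  compute_degree!

theorem wT_sq : wT ^ 2 = toT chi := by
  have hmem : (X 3 : MvPolynomial (Fin 4) ℂ) ^ 2 - rename Fin.castSucc chi ∈ relIdeal :=
    Ideal.subset_span rfl
  rw [wT, toT, AlgHom.comp_apply, ← map_pow, ← sub_eq_zero, ← map_sub, mkT,
    Ideal.Quotient.mkₐ_eq_mk, Ideal.Quotient.eq_zero_iff_mem]
  exact hmem

theorem exists_eq_toT_add_toT_mul_wT (t : T) : ∃ a b : R3, t = toT a + toT b * wT := by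
  obtain ⟨p, rfl⟩ := Ideal.Quotient.mkₐ_surjective ℂ relIdeal t
  induction p using MvPolynomial.induction_on with
  | C c => exact ⟨C c, 0, by simp [toT, mkT]⟩
  | add p q hp hq =>
    obtain ⟨a, b, hab⟩ := hp
    obtain ⟨a', b', hab'⟩ := hq
    exact ⟨a + a', b + b', by rw [map_add, hab, hab', map_add, map_add]; ring⟩
  | mul_X p i hp =>
    obtain ⟨a, b, hab⟩ := hp
    rw [map_mul, hab]
    induction i using Fin.lastCases with
    | last =>
      refine ⟨b * chi, a, ?_⟩
      change _ * wT = _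
      rw [map_mul, ← wT_sq]
      ring
    | cast j =>
      refine ⟨a * X j, b * X j, ?_⟩
      rw [← rename_X]
      change _ * toT (X j) = _
      rw [map_mul, map_mul]
      ring

theorem comap_toT_ne_bot {Q : Ideal T} (hQ : Q ≠ ⊥) : Q.comap toT ≠ ⊥ := by
  obtain ⟨t, htQ, ht0⟩ := Submodule.exists_mem_ne_zero_of_ne_bot hQ
  obtain ⟨a, b, rfl⟩ := exists_eq_toT_add_toT_mul_wT t
  have hnorm : toT (a ^ 2 - b ^ 2 * chi) = (toT a + toT b * wT) * (toT a - toT b * wT) := by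
    rw [map_sub, map_mul, map_pow, map_pow, ← wT_sq]
    ring
  refine fun hbot => ht0 ?_
  have hzero : a ^ 2 - b ^ 2 * chi = 0 := by
    rw [← Ideal.mem_bot, ← hbot, Ideal.mem_comap, hnorm]
    exact Q.mul_mem_right _ htQ
  have hb : b = 0 := MvPolynomial.eq_zero_of_sq_eq_sq_mul (i := 2)
    (by rw [degreeOf_two_chi]; decide) (sub_eq_zero.mp hzero)
  rw [hb, zero_pow two_ne_zero, zero_mul, sub_zero, pow_eq_zero_iff two_ne_zero] at hzero
  rw [hzero, hb, map_zero, zero_mul, add_zero]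

theorem toT_X_zero : toT (X 0) = xT := by rw [toT, AlgHom.comp_apply, rename_X]; rfl

theorem toT_X_one : toT (X 1) = yT := by rw [toT, AlgHom.comp_apply, rename_X]; rfl

theorem toT_X_two : toT (X 2) = zT := by rw [toT, AlgHom.comp_apply, rename_X]; rfl

section LowDerivations

variable {Q : Ideal T} [hQ : Q.IsPrime] {D : Derivation ℂ T T} {l : ℂ}

theorem pderiv_mem_comap_toT (hw : wT ∉ Q) (hDQ : ∀ q ∈ Q, D q ∈ Q) (hl : l ≠ 0) {i : Fin 3}
    (hi : D (toT (X i)) = CT l * wT) (hj : ∀ j ≠ i, D (toT (X j)) = 0) {p : R3}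
    (hp : p ∈ Q.comap toT) : pderiv i p ∈ Q.comap toT := by
  refine MvPolynomial.pderiv_mem_comap hDQ (fun hmem => ?_) hj hp
  rw [hi] at hmem
  refine (hQ.mem_or_mem hmem).elim (fun hlQ => ?_) hw
  exact hQ.ne_top (Q.eq_top_of_isUnit_mem hlQ ((isUnit_iff_ne_zero.mpr hl).map _))

theorem IsFLow.pderiv_mem_comap (hD : IsFLow l D) (hl : l ≠ 0) (hw : wT ∉ Q)
    (hDQ : ∀ q ∈ Q, D q ∈ Q) {p : R3} (hp : p ∈ Q.comap toT) : pderiv 0 p ∈ Q.comap toT := by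
  obtain ⟨hy, hz, hx, -⟩ := hD
  refine pderiv_mem_comap_toT hw hDQ hl (by rw [toT_X_zero, hx]) (fun j hj => ?_) hp
  fin_cases j <;> simp_all [toT_X_one, toT_X_two]

theorem IsELow.pderiv_mem_comap (hD : IsELow l D) (hl : l ≠ 0) (hw : wT ∉ Q)
    (hDQ : ∀ q ∈ Q, D q ∈ Q) {p : R3} (hp : p ∈ Q.comap toT) : pderiv 1 p ∈ Q.comap toT := by
  obtain ⟨hx, hz, hy, -⟩ := hD
  refine pderiv_mem_comap_toT hw hDQ hl (by rw [toT_X_one, hy]) (fun j hj => ?_) hp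
  fin_cases j <;> simp_all [toT_X_zero, toT_X_two]

theorem IsDLow.pderiv_mem_comap (hD : IsDLow l D) (hl : l ≠ 0) (hw : wT ∉ Q)
    (hDQ : ∀ q ∈ Q, D q ∈ Q) {p : R3} (hp : p ∈ Q.comap toT) : pderiv 2 p ∈ Q.comap toT := by
  obtain ⟨hx, hy, hz, -⟩ := hD
  refine pderiv_mem_comap_toT hw hDQ hl (by rw [toT_X_two, hz]) (fun j hj => ?_) hp
  fin_cases j <;> simp_all [toT_X_zero, toT_X_one]

end LowDerivations

theorem wT_mem_of_prime_Dstable_general (l₁ l₂ l₃ : ℂ) (h1 : l₁ ≠ 0) (h2 : l₂ ≠ 0) (h3 : l₃ ≠ 0)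
    (dT eT fT dS eS fS : Derivation ℂ T T)
    (hdS : IsDLow l₁ dS) (heS : IsELow l₂ eS) (hfS : IsFLow l₃ fS)
    (Q : Ideal T) (hQ : Q.IsPrime) (hQ0 : Q ≠ ⊥)
    (hst : DStableT dT eT fT dS eS fS Q) : wT ∈ Q := by
  obtain ⟨hd₁, hd₂, he₁, he₂, hf₁, hf₂⟩ := hst
  by_contra hw
  have hpderiv : ∀ i, ∀ p ∈ Q.comap toT, pderiv i p ∈ Q.comap toT
    | 0, _, hp => hfS.pderiv_mem_comap h3 hw (Derivation.apply_mem_of_add_of_sub hf₁ hf₂) hp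
    | 1, _, hp => heS.pderiv_mem_comap h2 hw (Derivation.apply_mem_of_add_of_sub he₁ he₂) hp
    | 2, _, hp => hdS.pderiv_mem_comap h1 hw (Derivation.apply_mem_of_add_of_sub hd₁ hd₂) hp
  exact comap_toT_ne_bot hQ0
    (MvPolynomial.ideal_eq_bot_of_pderiv_mem (Ideal.comap_ne_top _ hQ.ne_top) hpderiv)

/-- For nonzero `l₁, l₂, l₃ ∈ ℂ`, every nonzero prime `𝔇`-stable ideal of
`T = ℂ[X, Y, Z, W]/(W² - χ)` contains `w`. -/
theorem wT_mem_of_prime_Dstable (l₁ l₂ l₃ : ℂ) (h1 : l₁ ≠ 0) (h2 : l₂ ≠ 0) (h3 : l₃ ≠ 0)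
    (dT eT fT dS eS fS : Derivation ℂ T T)
    (hdT : IsDStarT dT) (heT : IsEStarT eT) (hfT : IsFStarT fT)
    (hdS : IsDLow l₁ dS) (heS : IsELow l₂ eS) (hfS : IsFLow l₃ fS)
    (Q : Ideal T) (hQ : Q.IsPrime) (hQ0 : Q ≠ ⊥)
    (hst : DStableT dT eT fT dS eS fS Q) : wT ∈ Q :=
  wT_mem_of_prime_Dstable_general l₁ l₂ l₃ h1 h2 h3 dT eT fT dS eS fS hdS heS hfS Q hQ hQ0 hst
end
end

section
/- Let F be a Hilbert quasi-modular form of weight (k₁,…,kₙ) ∈ ℤⁿ and depth ≤ s, with coefficient system (f₍ₛ₁,…,ₛₙ₎) as in the definition. Then for every (s₁,…,sₙ) ∈ ℕⁿ with s₁+⋯+sₙ = s, the coefficient f₍ₛ₁,…,ₛₙ₎ satisfies the transformation law of a Hilbert modular form of weight (k₁−2s₁,…,kₙ−2sₙ): for all γ = [[a,b],[c,d]] ∈ Γ_K and z ∈ ℍⁿ, f₍ₛ₁,…,ₛₙ₎(γ(z)) = ∏ᵢ(σᵢ(c)zᵢ+σᵢ(d))^{kᵢ−2sᵢ}·f₍ₛ₁,…,ₛₙ₎(z).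 -/
set_option synthInstance.maxHeartbeats 1000000
set_option maxHeartbeats 1000000
open scoped Classical

noncomputable section

open Complex

/-- The product of upper half planes, as a subset of `ℂⁿ`. -/
def UpperHalfSpace (n : ℕ) : Set (Fin n → ℂ) := {z | ∀ i, 0 < (z i).im}

/-- Functions on `ℍⁿ`. -/
abbrev HFun (n : ℕ) : Type := ↥(UpperHalfSpace n) → ℂ

/-- Extension by zero of a function on `ℍⁿ` to `ℂⁿ`. -/
def extFun {n : ℕ} (F : HFun n) : (Fin n → ℂ) → ℂ :=
  fun z => if h : z ∈ UpperHalfSpace n then F ⟨z, h⟩ else 0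

/-- A function on `ℍⁿ` is holomorphic if it is (complex) differentiable on the open set `ℍⁿ`. -/
def IsHolo {n : ℕ} (F : HFun n) : Prop := DifferentiableOn ℂ (extFun F) (UpperHalfSpace n)

/-- The derivation `Dᵢ = (2πi)⁻¹ ∂/∂zᵢ`. -/
def Dop {n : ℕ} (i : Fin n) (F : HFun n) : HFun n :=
  fun z => (2 * (Real.pi : ℂ) * Complex.I)⁻¹ *
    fderiv ℂ (extFun F) (z : Fin n → ℂ) (Pi.single i 1)

/-- The entry `σᵢ(γ p q)` of an element `γ` of the Hilbert modular group `SL₂(𝓞_K)`,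
viewed as a complex number via the `i`-th real embedding `σ i` of `K`. -/
def entry {K : Type*} [Field K] [NumberField K] {n : ℕ} (σ : Fin n → (K →+* ℝ))
    (γ : Matrix.SpecialLinearGroup (Fin 2) (NumberField.RingOfIntegers K))
    (i : Fin n) (p q : Fin 2) : ℂ :=
  ((σ i (algebraMap (NumberField.RingOfIntegers K) K
    ((γ : Matrix (Fin 2) (Fin 2) (NumberField.RingOfIntegers K)) p q)) : ℝ) : ℂ)

/-- The Möbius action of `γ ∈ SL₂(𝓞_K)` on `ℍⁿ ⊆ ℂⁿ`, via the `n` real embeddings. -/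
def mobius {K : Type*} [Field K] [NumberField K] {n : ℕ} (σ : Fin n → (K →+* ℝ))
    (γ : Matrix.SpecialLinearGroup (Fin 2) (NumberField.RingOfIntegers K))
    (z : Fin n → ℂ) : Fin n → ℂ :=
  fun i => (entry σ γ i 0 0 * z i + entry σ γ i 0 1) /
    (entry σ γ i 1 0 * z i + entry σ γ i 1 1)

/-- The transformation law of a Hilbert quasi-modular form of weight `k` and depth `≤ s`,
with coefficient system `f`. -/
def QMTransform {K : Type*} [Field K] [NumberField K] {n : ℕ} (σ : Fin n → (K →+* ℝ))
    (k : Fin n → ℤ) (s : ℕ) (F : HFun n) (f : (Fin n → Fin (s + 1)) → HFun n) : Prop :=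
  ∀ γ : Matrix.SpecialLinearGroup (Fin 2) (NumberField.RingOfIntegers K),
    ∀ z : ↥(UpperHalfSpace n),
      extFun F (mobius σ γ (z : Fin n → ℂ)) =
        (∏ i, (entry σ γ i 1 0 * (z : Fin n → ℂ) i + entry σ γ i 1 1) ^ (k i)) *
          ∑ v ∈ Finset.univ.filter (fun v : Fin n → Fin (s + 1) => ∑ i, (v i : ℕ) ≤ s),
            f v z * ∏ i, (entry σ γ i 1 0 /
              (entry σ γ i 1 0 * (z : Fin n → ℂ) i + entry σ γ i 1 1)) ^ ((v i : ℕ))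

/-- `F` is a Hilbert quasi-modular form of weight `k` and depth `≤ s`
(a Hilbert modular form when `s = 0`). -/
def IsHQMF {K : Type*} [Field K] [NumberField K] {n : ℕ} (σ : Fin n → (K →+* ℝ))
    (k : Fin n → ℤ) (s : ℕ) (F : HFun n) : Prop :=
  IsHolo F ∧ ∃ f : (Fin n → Fin (s + 1)) → HFun n,
    (∀ v, IsHolo (f v)) ∧ QMTransform σ k s F f

/-- The ring `Y(K)`: the `ℂ`-subalgebra of functions on `ℍⁿ` generated by all
Hilbert quasi-modular forms. -/
def YK {K : Type*} [Field K] [NumberField K] {n : ℕ} (σ : Fin n → (K →+* ℝ)) :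
    Subalgebra ℂ (HFun n) :=
  Algebra.adjoin ℂ {F | ∃ k s, IsHQMF σ k s F}

/-!
Fix `γ = [[a, b], [c, d]]` and `z`, and put `w = γ z`, `Jᵢ = σᵢ(c) zᵢ + σᵢ(d)`. For `e ∈ 𝓞_K` let
`τₑ = [[1, 0], [e, 1]]`. The transformation laws of `τₑ γ` at `z` and of `τₑ` at `w`, together with
the cocycle relations of the automorphy factor, give

  `∑ᵥ f_v(w) Xᵛ = ∏ᵢ Jᵢ^{kᵢ} · ∑ᵥ f_v(z) ∏ᵢ (σᵢ(c)/Jᵢ + Xᵢ/Jᵢ²)^{vᵢ}`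
  at `Xᵢ = σᵢ(e) / (σᵢ(e) wᵢ + 1)`.

The points `(σᵢ(e))ᵢ`, `e ∈ 𝓞_K`, are Zariski dense in `ℂⁿ`: for an integral `θ` with distinct
conjugates `σᵢ(θ)`, the (invertible) Vandermonde matrix of these conjugates maps `ℤⁿ` onto the
points `(σᵢ(e))ᵢ` with `e ∈ ℤ + ℤθ + ⋯ + ℤθⁿ⁻¹`. Clearing denominators, so are their
images under the coordinatewise Möbius map `x ↦ x / (x w + 1)`. Hence the identity holds between
polynomials in `X`, and comparing the coefficients of the monomials of total degree `s` gives
`f_v(w) = ∏ᵢ Jᵢ^{kᵢ - 2vᵢ} f_v(z)`.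
-/

namespace MvPolynomial

variable {ι : Type*} [Fintype ι]

theorem coeff_prod_toMvPolynomial {R : Type*} [CommSemiring R] (p : ι → Polynomial R)
    (d : ι →₀ ℕ) : coeff d (∏ i, (p i).toMvPolynomial i) = ∏ i, (p i).coeff (d i) := by
  have expand : ∀ i, (p i).toMvPolynomial i =
      ∑ j ∈ Finset.range ((p i).natDegree + 1), monomial (Finsupp.single i j) ((p i).coeff j) := by
    intro i
    conv_lhs => rw [(p i).as_sum_range_C_mul_X_pow]
    simp [map_sum, C_mul_X_pow_eq_monomial]
  simp_rw [expand, Finset.prod_univ_sum, ← monomial_sum_prod, coeff_sum, coeff_monomial,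
    ← Finsupp.equivFunOnFinite_symm_eq_sum, Equiv.symm_apply_eq, Finset.sum_ite_eq']
  split_ifs with hd
  · rfl
  simp only [Fintype.mem_piFinset, Finset.mem_range, not_forall, not_lt] at hd
  obtain ⟨i, hi⟩ := hd
  exact (Finset.prod_eq_zero (Finset.mem_univ i)
    (Polynomial.coeff_eq_zero_of_natDegree_lt hi)).symm

variable {R : Type*} [CommRing R]

theorem coeff_prod_C_add_C_mul_X_pow (a b : ι → R) {u v : ι → ℕ}
    (huv : ∑ i, u i ≤ ∑ i, v i) :
    coeff (Finsupp.equivFunOnFinite.symm v) (∏ i, (C (a i) + C (b i) * X i) ^ u i) =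
      if u = v then ∏ i, b i ^ v i else 0 := by
  have hlin : ∀ i, (Polynomial.C (a i) + Polynomial.C (b i) * Polynomial.X).natDegree ≤ 1 :=
    fun i ↦ by compute_degree
  have hprod : ∏ i, (C (a i) + C (b i) * X i : MvPolynomial ι R) ^ u i =
      ∏ i, ((Polynomial.C (a i) + Polynomial.C (b i) * Polynomial.X) ^ u i).toMvPolynomial i := by
    simp
  rw [hprod, coeff_prod_toMvPolynomial]
  split_ifs with h
  · subst h
    refine Finset.prod_congr rfl fun i _ ↦ ?_
    simpa using Polynomial.coeff_pow_of_natDegree_le (m := u i) (hlin i)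
  · obtain ⟨i, hi⟩ : ∃ i, u i < v i := by
      by_contra! hvu
      have hsum := le_antisymm (Finset.sum_le_sum fun i _ ↦ hvu i) huv
      exact h (_root_.funext fun i ↦
        ((Finset.sum_eq_sum_iff_of_le fun i _ ↦ hvu i).mp hsum i (Finset.mem_univ i)).symm)
    refine Finset.prod_eq_zero (Finset.mem_univ i) (Polynomial.coeff_eq_zero_of_natDegree_lt ?_)
    exact (Polynomial.natDegree_pow_le_of_le (u i) (hlin i)).trans_lt (by rwa [mul_one])

theorem coeff_sum_C_mul_prod_C_add_C_mul_X_pow {κ : Type*} (D : Finset κ) {e : κ → ι → ℕ}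
    (he : Function.Injective e) (c : κ → R) (a b : ι → R) {v : κ} (hv : v ∈ D)
    (hmax : ∀ u ∈ D, ∑ i, e u i ≤ ∑ i, e v i) :
    coeff (Finsupp.equivFunOnFinite.symm (e v))
        (∑ u ∈ D, C (c u) * ∏ i, (C (a i) + C (b i) * X i) ^ e u i) =
      c v * ∏ i, b i ^ e v i := by
  simp only [coeff_sum, coeff_C_mul]
  rw [Finset.sum_eq_single_of_mem v hv fun u hu huv ↦ ?_,
    coeff_prod_C_add_C_mul_X_pow a b le_rfl, if_pos rfl]
  rw [coeff_prod_C_add_C_mul_X_pow a b (hmax u hu), if_neg (he.ne huv), mul_zero]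

variable {𝕜 : Type*} [Field 𝕜] [Infinite 𝕜]

theorem eq_zero_of_eval_eq_zero_of_eval_ne_zero {σ : Type*} {p h : MvPolynomial σ 𝕜} (hh : h ≠ 0)
    (hp : ∀ x, eval x h ≠ 0 → eval x p = 0) : p = 0 := by
  have hph : p * h = 0 := MvPolynomial.funext fun x ↦ by
    by_cases hx : eval x h = 0 <;> simp [hx, hp]
  exact (mul_eq_zero.mp hph).resolve_right hh

theorem eq_zero_of_eval_div_mul_add_one_eq_zero {E : Type*} {x : E → ι → 𝕜}
    (hx : ∀ q : MvPolynomial ι 𝕜, (∀ t, eval (x t) q = 0) → q = 0) {w : ι → 𝕜}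
    (hxw : ∀ t i, x t i * w i + 1 ≠ 0) {p : MvPolynomial ι 𝕜}
    (hp : ∀ t, eval (fun i ↦ x t i / (x t i * w i + 1)) p = 0) : p = 0 := by
  set q : MvPolynomial ι 𝕜 := ∑ m ∈ p.support,
    C (coeff m p) * ∏ i, X i ^ m i * (X i * C (w i) + 1) ^ (p.degreeOf i - m i)
  have eval_q : ∀ y : ι → 𝕜, (∀ i, y i * w i + 1 ≠ 0) → eval y q =
      (∏ i, (y i * w i + 1) ^ p.degreeOf i) * eval (fun i ↦ y i / (y i * w i + 1)) p := by
    intro y hy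
    rw [eval_eq' _ p, Finset.mul_sum]
    simp only [q, map_sum, map_mul, map_prod, map_pow, map_add, eval_C, eval_X, map_one]
    refine Finset.sum_congr rfl fun m hm ↦ ?_
    rw [mul_left_comm, ← Finset.prod_mul_distrib]
    congr 1
    refine Finset.prod_congr rfl fun i _ ↦ ?_
    rw [div_pow, ← Nat.sub_add_cancel (monomial_le_degreeOf i hm), pow_add, Nat.add_sub_cancel]
    field_simp [pow_ne_zero _ (hy i)]
  have hq : q = 0 := hx q fun t ↦ by rw [eval_q _ (hxw t), hp t, mul_zero]
  -- `p` vanishes off the hyperplanes `T i * w i = 1`, where `T = x / (x w + 1)` can be inverted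
  refine eq_zero_of_eval_eq_zero_of_eval_ne_zero (h := ∏ i, (1 - X i * C (w i)))
    (fun h0 ↦ by simpa using congrArg (eval 0) h0) fun T hT ↦ ?_
  have hT' : ∀ i, 1 - T i * w i ≠ 0 := by
    simpa [Finset.prod_ne_zero_iff] using hT
  set y : ι → 𝕜 := fun i ↦ T i / (1 - T i * w i)
  have hy : ∀ i, y i * w i + 1 = (1 - T i * w i)⁻¹ := fun i ↦ by
    simp only [y]; field_simp [hT' i]; ring
  have hyT : (fun i ↦ y i / (y i * w i + 1)) = T := _root_.funext fun i ↦ by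
    rw [hy i]; simp only [y]; field_simp [hT' i]
  have h0 := eval_q y fun i ↦ by rw [hy i]; exact inv_ne_zero (hT' i)
  rw [hq, map_zero, hyT] at h0
  refine (mul_eq_zero.mp h0.symm).resolve_left ?_
  exact Finset.prod_ne_zero_iff.mpr fun i _ ↦ by
    rw [hy i]; exact pow_ne_zero _ (inv_ne_zero (hT' i))

end MvPolynomial

open MvPolynomial in
theorem top_coeff_eq_of_mobius_identity {ι κ 𝕜 E : Type*} [Fintype ι] [Field 𝕜] [Infinite 𝕜]
    {x : E → ι → 𝕜} (hx : ∀ q : MvPolynomial ι 𝕜, (∀ t, eval (x t) q = 0) → q = 0)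
    {w : ι → 𝕜} (hxw : ∀ t i, x t i * w i + 1 ≠ 0) (D : Finset κ) {e : κ → ι → ℕ}
    (he : Function.Injective e) {φ ψ : κ → 𝕜} {P : 𝕜} {a b : ι → 𝕜}
    (h : ∀ t, ∑ u ∈ D, φ u * ∏ i, (x t i / (x t i * w i + 1)) ^ e u i =
      P * ∑ u ∈ D, ψ u * ∏ i, (a i + b i * (x t i / (x t i * w i + 1))) ^ e u i)
    {v : κ} (hv : v ∈ D) (hmax : ∀ u ∈ D, ∑ i, e u i ≤ ∑ i, e v i) :
    φ v = P * (ψ v * ∏ i, b i ^ e v i) := by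
  set Q : MvPolynomial ι 𝕜 :=
    ∑ u ∈ D, C (φ u) * ∏ i, (C 0 + C 1 * X i) ^ e u i -
      C P * ∑ u ∈ D, C (ψ u) * ∏ i, (C (a i) + C (b i) * X i) ^ e u i
  have hQ : Q = 0 := eq_zero_of_eval_div_mul_add_one_eq_zero hx hxw fun t ↦ by
    simpa [Q, sub_eq_zero] using h t
  have hcoeff := congrArg (coeff (Finsupp.equivFunOnFinite.symm (e v))) hQ
  rw [coeff_sub, coeff_C_mul, coeff_sum_C_mul_prod_C_add_C_mul_X_pow D he _ _ _ hv hmax,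
    coeff_sum_C_mul_prod_C_add_C_mul_X_pow D he _ _ _ hv hmax, coeff_zero] at hcoeff
  simpa [sub_eq_zero] using hcoeff

theorem NumberField.exists_ringOfIntegers_injective {K 𝕜 ι : Type*} [Field K] [NumberField K]
    [Field 𝕜] [CharZero 𝕜] {τ : ι → K →+* 𝕜} (hτ : Function.Injective τ) :
    ∃ θ : RingOfIntegers K, Function.Injective fun i ↦ τ i θ := by
  obtain ⟨α, hα⟩ := Field.exists_primitive_element ℚ K
  obtain ⟨m, hm, hint⟩ := ((IsFractionRing.isAlgebraic_iff ℤ ℚ K).mpr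
    (Algebra.IsAlgebraic.isAlgebraic α)).exists_integral_multiple
  refine ⟨⟨m • α, hint⟩, fun i j hij ↦ hτ ?_⟩
  have hij' : τ i α = τ j α := by simpa [hm] using hij
  have hadj : Algebra.adjoin ℚ {α} = ⊤ :=
    Algebra.adjoin_eq_top_of_primitive_element (Algebra.IsAlgebraic.isAlgebraic α) hα
  have := AlgHom.ext_of_adjoin_eq_top hadj (φ₁ := (τ i).toRatAlgHom) (φ₂ := (τ j).toRatAlgHom)
    (by simpa using hij')
  exact congrArg AlgHom.toRingHom this

theorem MvPolynomial.eq_zero_of_eval_ringOfIntegers {K 𝕜 : Type*} [Field K] [NumberField K]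
    [Field 𝕜] [CharZero 𝕜] {n : ℕ} {τ : Fin n → K →+* 𝕜} (hτ : Function.Injective τ)
    {q : MvPolynomial (Fin n) 𝕜}
    (hq : ∀ e : NumberField.RingOfIntegers K, eval (fun i ↦ τ i e) q = 0) : q = 0 := by
  obtain ⟨θ, hθ⟩ := NumberField.exists_ringOfIntegers_injective hτ
  set M := Matrix.vandermonde fun i ↦ τ i θ
  have hM : IsUnit M.det := isUnit_iff_ne_zero.mpr (Matrix.det_vandermonde_ne_zero_iff.mpr hθ)
  have eval_bind : ∀ x, eval x (bind₁ M.toMvPolynomial q) = eval (M.mulVec x) q := by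
    intro x
    simp only [hom_bind₁, Matrix.toMvPolynomial_eval_eq_apply]
    rw [show (eval x).comp C = RingHom.id 𝕜 from RingHom.ext fun a ↦ eval_C a]
    rfl
  have hint : bind₁ M.toMvPolynomial q = 0 := by
    refine funext_set (fun _ ↦ Set.range (Int.cast : ℤ → 𝕜))
      (fun _ ↦ Set.infinite_range_of_injective Int.cast_injective) fun x hxℤ ↦ ?_
    choose m hm using fun i ↦ hxℤ i (Set.mem_univ i)
    set e : NumberField.RingOfIntegers K := ∑ j, m j • θ ^ (j : ℕ)
    have hx : M.mulVec x = fun i ↦ τ i e := by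
      ext i
      simp [e, M, Matrix.mulVec, dotProduct, Matrix.vandermonde, ← hm, mul_comm]
    rw [eval_bind, hx, map_zero]
    exact hq e
  refine MvPolynomial.funext fun x ↦ ?_
  have hMx : M.mulVec (M⁻¹.mulVec x) = x := by
    rw [Matrix.mulVec_mulVec, Matrix.mul_nonsing_inv _ hM, Matrix.one_mulVec]
  calc eval x q = eval (M.mulVec (M⁻¹.mulVec x)) q := by rw [hMx]
    _ = 0 := by rw [← eval_bind, hint, map_zero]
    _ = eval x 0 := (map_zero _).symm

theorem zpow_sub_two_mul {𝕜 : Type*} [Field 𝕜] {j : 𝕜} (hj : j ≠ 0) (k : ℤ) (m : ℕ) :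
    j ^ (k - 2 * (m : ℤ)) = j ^ k * ((j ^ 2)⁻¹) ^ m := by
  rw [zpow_sub₀ hj, zpow_mul, zpow_ofNat, zpow_natCast, div_eq_mul_inv, inv_pow]

namespace Complex

theorem ofReal_mul_add_ofReal_ne_zero {c d : ℝ} (hcd : c ≠ 0 ∨ d ≠ 0) {z : ℂ} (hz : 0 < z.im) :
    (c : ℂ) * z + d ≠ 0 := by
  intro h
  have hc : c = 0 := by
    simpa [hz.ne'] using congrArg Complex.im h
  have hd : d = 0 := by
    simpa [hc] using congrArg Complex.re h
  exact hcd.elim (· hc) (· hd)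

theorem im_ofReal_mul_add_div {a b c d : ℝ} (hdet : a * d - b * c = 1) (z : ℂ) :
    (((a : ℂ) * z + b) / ((c : ℂ) * z + d)).im = z.im / normSq ((c : ℂ) * z + d) := by
  rw [div_im, div_sub_div_same]
  congr 1
  simp only [add_re, add_im, mul_re, mul_im, ofReal_re, ofReal_im]
  linear_combination z.im * hdet

end Complex

section HilbertModularGroup

variable {K : Type*} [Field K] [NumberField K] {n : ℕ} {σ : Fin n → (K →+* ℝ)}

local notation "SL₂𝓞" => Matrix.SpecialLinearGroup (Fin 2) (NumberField.RingOfIntegers K)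

def denom (σ : Fin n → (K →+* ℝ)) (γ : SL₂𝓞) (z : Fin n → ℂ) (i : Fin n) : ℂ :=
  entry σ γ i 1 0 * z i + entry σ γ i 1 1

theorem entry_mul (α β : SL₂𝓞) (i : Fin n) (p q : Fin 2) :
    entry σ (α * β) i p q =
      entry σ α i p 0 * entry σ β i 0 q + entry σ α i p 1 * entry σ β i 1 q := by
  simp [entry, Matrix.mul_apply, Fin.sum_univ_two]

theorem entry_det (σ : Fin n → (K →+* ℝ)) (γ : SL₂𝓞) (i : Fin n) :
    entry σ γ i 0 0 * entry σ γ i 1 1 - entry σ γ i 0 1 * entry σ γ i 1 0 = 1 := by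
  have h := γ.2
  rw [Matrix.det_fin_two] at h
  simpa [entry] using congrArg (fun x ↦ ((σ i (algebraMap _ K x) : ℝ) : ℂ)) h

theorem denom_ne_zero (γ : SL₂𝓞) {z : Fin n → ℂ} (hz : z ∈ UpperHalfSpace n) (i : Fin n) :
    denom σ γ z i ≠ 0 := by
  refine Complex.ofReal_mul_add_ofReal_ne_zero ?_ (hz i)
  by_contra! h
  simpa [entry, h.1, h.2] using entry_det σ γ i

theorem mobius_mem_upperHalfSpace (γ : SL₂𝓞) {z : Fin n → ℂ} (hz : z ∈ UpperHalfSpace n) :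
    mobius σ γ z ∈ UpperHalfSpace n := fun i ↦ by
  have hdet := entry_det σ γ i
  simp only [mobius, entry] at hdet ⊢
  rw [Complex.im_ofReal_mul_add_div (by exact_mod_cast hdet)]
  exact div_pos (hz i) (Complex.normSq_pos.mpr (denom_ne_zero γ hz i))

theorem denom_mul (α β : SL₂𝓞) {z : Fin n → ℂ} (hz : z ∈ UpperHalfSpace n) (i : Fin n) :
    denom σ (α * β) z i = denom σ α (mobius σ β z) i * denom σ β z i := by
  have hβ := denom_ne_zero (σ := σ) β hz i
  simp only [denom, mobius, entry_mul] at hβ ⊢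
  field_simp
  ring

theorem mobius_mul (α β : SL₂𝓞) {z : Fin n → ℂ} (hz : z ∈ UpperHalfSpace n) :
    mobius σ (α * β) z = mobius σ α (mobius σ β z) := by
  ext i
  have hβ := denom_ne_zero (σ := σ) β hz i
  have hα := denom_ne_zero (σ := σ) α (mobius_mem_upperHalfSpace (σ := σ) β hz) i
  rw [mobius, ← denom, denom_mul α β hz i]
  simp only [denom, mobius, entry_mul] at hβ hα ⊢
  field_simp
  ring

theorem entry_div_denom_mul (α β : SL₂𝓞) {z : Fin n → ℂ} (hz : z ∈ UpperHalfSpace n)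
    (i : Fin n) :
    entry σ (α * β) i 1 0 / denom σ (α * β) z i = entry σ β i 1 0 / denom σ β z i +
      (denom σ β z i ^ 2)⁻¹ * (entry σ α i 1 0 / denom σ α (mobius σ β z) i) := by
  have hβ := denom_ne_zero (σ := σ) β hz i
  have hα := denom_ne_zero (σ := σ) α (mobius_mem_upperHalfSpace (σ := σ) β hz) i
  have hw : mobius σ β z i * denom σ β z i = entry σ β i 0 0 * z i + entry σ β i 0 1 :=
    div_mul_cancel₀ _ hβ
  rw [denom_mul α β hz i, entry_mul]
  field_simp
  unfold denom at hw ⊢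
  linear_combination entry σ α i 1 0 * entry_det σ β i - entry σ β i 1 0 * entry σ α i 1 0 * hw

def mobiusH (σ : Fin n → (K →+* ℝ)) (γ : SL₂𝓞) (z : ↥(UpperHalfSpace n)) :
    ↥(UpperHalfSpace n) :=
  ⟨mobius σ γ z, mobius_mem_upperHalfSpace γ z.2⟩

@[simp]
theorem coe_mobiusH (γ : SL₂𝓞) (z : ↥(UpperHalfSpace n)) :
    (mobiusH σ γ z : Fin n → ℂ) = mobius σ γ z :=
  rfl

theorem extFun_mobius (G : HFun n) (γ : SL₂𝓞) (z : ↥(UpperHalfSpace n)) :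
    extFun G (mobius σ γ z) = G (mobiusH σ γ z) :=
  dif_pos _

def lowerUnipotent (e : NumberField.RingOfIntegers K) : SL₂𝓞 :=
  ⟨!![1, 0; e, 1], by simp [Matrix.det_fin_two_of]⟩

@[simp]
theorem entry_lowerUnipotent_one_zero (e : NumberField.RingOfIntegers K) (i : Fin n) :
    entry σ (lowerUnipotent e) i 1 0 = (σ i e : ℂ) := by
  simp [entry, lowerUnipotent]

@[simp]
theorem denom_lowerUnipotent (e : NumberField.RingOfIntegers K) (w : Fin n → ℂ) (i : Fin n) :
    denom σ (lowerUnipotent e) w i = (σ i e : ℂ) * w i + 1 := by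
  simp [denom, entry, lowerUnipotent]

def depthIndices (n s : ℕ) : Finset (Fin n → Fin (s + 1)) :=
  Finset.univ.filter fun v ↦ ∑ i, (v i : ℕ) ≤ s

variable {k : Fin n → ℤ} {s : ℕ} {F : HFun n} {f : (Fin n → Fin (s + 1)) → HFun n}

theorem QMTransform.apply (ht : QMTransform σ k s F f) (γ : SL₂𝓞) (z : ↥(UpperHalfSpace n)) :
    F (mobiusH σ γ z) = (∏ i, denom σ γ z i ^ k i) *
      ∑ v ∈ depthIndices n s, f v z * ∏ i, (entry σ γ i 1 0 / denom σ γ z i) ^ (v i : ℕ) := by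
  rw [← extFun_mobius F]
  exact ht γ z

/-- The transformation laws of `α * β` at `z` and of `α` at `β z`, compared. -/
theorem QMTransform.sum_mul_prod_eq (ht : QMTransform σ k s F f) (α β : SL₂𝓞)
    (z : ↥(UpperHalfSpace n)) :
    ∑ v ∈ depthIndices n s, f v (mobiusH σ β z) *
        ∏ i, (entry σ α i 1 0 / denom σ α (mobius σ β z) i) ^ (v i : ℕ) =
      (∏ i, denom σ β z i ^ k i) * ∑ v ∈ depthIndices n s, f v z *
        ∏ i, (entry σ β i 1 0 / denom σ β z i +
          (denom σ β z i ^ 2)⁻¹ * (entry σ α i 1 0 / denom σ α (mobius σ β z) i)) ^ (v i : ℕ) := by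
  have hαβ := ht.apply (α * β) z
  have hα := ht.apply α (mobiusH σ β z)
  have hmul : mobiusH σ (α * β) z = mobiusH σ α (mobiusH σ β z) :=
    Subtype.ext (mobius_mul α β z.2)
  simp only [entry_div_denom_mul α β z.2] at hαβ
  simp only [denom_mul α β z.2, mul_zpow, Finset.prod_mul_distrib, hmul, hα, coe_mobiusH,
    mul_assoc] at hαβ
  refine mul_left_cancel₀ (Finset.prod_ne_zero_iff.mpr fun i _ ↦ zpow_ne_zero _ ?_) hαβ
  exact denom_ne_zero α (mobius_mem_upperHalfSpace β z.2) i

end HilbertModularGroup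

theorem top_coefficients_are_modular_general
    {K : Type*} [Field K] [NumberField K] {n : ℕ}
    (σ : Fin n → (K →+* ℝ)) (hσ : Function.Injective σ)
    (k : Fin n → ℤ) (s : ℕ) (F : HFun n) (f : (Fin n → Fin (s + 1)) → HFun n)
    (ht : QMTransform σ k s F f) :
    ∀ v : Fin n → Fin (s + 1), (∑ i, (v i : ℕ)) = s →
      ∀ γ : Matrix.SpecialLinearGroup (Fin 2) (NumberField.RingOfIntegers K),
        ∀ z : ↥(UpperHalfSpace n),
          extFun (f v) (mobius σ γ (z : Fin n → ℂ)) =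
            (∏ i, (entry σ γ i 1 0 * (z : Fin n → ℂ) i + entry σ γ i 1 1)
                ^ (k i - 2 * ((v i : ℕ) : ℤ))) * f v z := by
  intro v hv γ z
  have hdense (q : MvPolynomial (Fin n) ℂ)
      (hq : ∀ e : NumberField.RingOfIntegers K, MvPolynomial.eval (fun i ↦ (σ i e : ℂ)) q = 0) :
      q = 0 :=
    MvPolynomial.eq_zero_of_eval_ringOfIntegers (τ := fun i ↦ Complex.ofRealHom.comp (σ i))
      (fun i j hij ↦ hσ (RingHom.ext fun x ↦ Complex.ofReal_injective (RingHom.congr_fun hij x))) hq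
  have key := top_coeff_eq_of_mobius_identity hdense (w := mobius σ γ z)
    (fun e i ↦ by
      simpa using denom_ne_zero (σ := σ) (lowerUnipotent e) (mobius_mem_upperHalfSpace γ z.2) i)
    (depthIndices n s) (e := fun u i ↦ (u i : ℕ))
    (fun u u' h ↦ funext fun i ↦ Fin.ext (congrFun h i))
    (fun e ↦ by simpa using ht.sum_mul_prod_eq (lowerUnipotent e) γ z)
    (v := v) (by simp [depthIndices, hv]) (fun u hu ↦ by simpa [depthIndices, hv] using hu)
  change _ = (∏ i, denom σ γ z i ^ (k i - 2 * ((v i : ℕ) : ℤ))) * f v z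
  rw [extFun_mobius, key]
  simp only [zpow_sub_two_mul (denom_ne_zero γ z.2 _), Finset.prod_mul_distrib]
  ring

/-- The top-depth coefficients of a Hilbert quasi-modular form of weight
`(k₁, …, kₙ)` and depth `≤ s` transform like Hilbert modular forms of weight
`(k₁ - 2s₁, …, kₙ - 2sₙ)`. -/
theorem top_coefficients_are_modular
    {K : Type*} [Field K] [NumberField K] {n : ℕ}
    (hdeg : Module.finrank ℚ K = n)
    (σ : Fin n → (K →+* ℝ)) (hσ : Function.Injective σ)
    (k : Fin n → ℤ) (s : ℕ) (F : HFun n) (f : (Fin n → Fin (s + 1)) → HFun n)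
    (hF : IsHolo F) (hf : ∀ v, IsHolo (f v)) (ht : QMTransform σ k s F f) :
    ∀ v : Fin n → Fin (s + 1), (∑ i, (v i : ℕ)) = s →
      ∀ γ : Matrix.SpecialLinearGroup (Fin 2) (NumberField.RingOfIntegers K),
        ∀ z : ↥(UpperHalfSpace n),
          extFun (f v) (mobius σ γ (z : Fin n → ℂ)) =
            (∏ i, (entry σ γ i 1 0 * (z : Fin n → ℂ) i + entry σ γ i 1 1)
                ^ (k i - 2 * ((v i : ℕ) : ℤ))) * f v z :=
  top_coefficients_are_modular_general σ hσ k s F f ht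
end
end
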